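/- Let p be a prime and let k be an integer with 0 ≤ k ≤ p−1. Then C(p−1,k)²·C(p+k,k)² ≡ 1 − 2p²·H_k^{(2)} + p⁴·H_k^{(4)} + 4p⁴·H(2,2;k) − 2p⁶·(H(2,4;k) + H(4,2;k)) − 8p⁶·H(2,2,2;k) (mod p⁷), where the congruence of rational numbers means the p-adic valuation of the difference is at least 7. -/

import Mathlib

/-- The `n`-th Apéry number `A_n = ∑_{k=0}^n C(n+k,k)^2 C(n,k)^2`. -/
def apery (n : ℕ) : ℚ :=
  ∑ k ∈ Finset.range (n + 1), ((n + k).choose k : ℚ) ^ 2 * (n.choose k : ℚ) ^ 2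

/-- The harmonic number of order `m`: `H_n^{(m)} = ∑_{k=1}^n 1/k^m`. -/
def hsum (m n : ℕ) : ℚ := ∑ k ∈ Finset.Icc 1 n, 1 / (k : ℚ) ^ m

/-- The multiple harmonic sum `H(a,b;n) = ∑_{1 ≤ i < j ≤ n} 1/(i^a j^b)`. -/
def mhs2 (a b n : ℕ) : ℚ :=
  ∑ j ∈ Finset.Icc 1 n, ∑ i ∈ Finset.Ico 1 j, 1 / ((i : ℚ) ^ a * (j : ℚ) ^ b)

/-- The multiple harmonic sum `H(a,b,c;n) = ∑_{1 ≤ i < j < l ≤ n} 1/(i^a j^b l^c)`. -/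
def mhs3 (a b c n : ℕ) : ℚ :=
  ∑ l ∈ Finset.Icc 1 n, ∑ j ∈ Finset.Ico 1 l, ∑ i ∈ Finset.Ico 1 j,
    1 / ((i : ℚ) ^ a * (j : ℚ) ^ b * (l : ℚ) ^ c)

/-- `padicCongr p r x y` means `x ≡ y (mod p^r)` for rationals, i.e. the `p`-adic
valuation of `x - y` is at least `r` (equivalently, the `p`-adic norm of `x - y`
is at most `p^(-r)`). -/
def padicCongr (p : ℕ) [Fact p.Prime] (r : ℤ) (x y : ℚ) : Prop :=
  ‖((x - y : ℚ) : ℚ_[p])‖ ≤ (p : ℝ) ^ (-r)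


open Finset

section helpers

variable (p : ℕ) [Fact p.Prime]

lemma ult_add {x y : ℚ_[p]} (hx : ‖x‖ ≤ 1) (hy : ‖y‖ ≤ 1) : ‖x + y‖ ≤ 1 :=
  le_trans (Padic.nonarchimedean x y) (max_le hx hy)

lemma ult_sub {x y : ℚ_[p]} (hx : ‖x‖ ≤ 1) (hy : ‖y‖ ≤ 1) : ‖x - y‖ ≤ 1 := by
  rw [sub_eq_add_neg]
  exact ult_add p hx (by rwa [norm_neg])

lemma ult_mul {x y : ℚ_[p]} (hx : ‖x‖ ≤ 1) (hy : ‖y‖ ≤ 1) : ‖x * y‖ ≤ 1 := by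
  rw [norm_mul]
  exact mul_le_one₀ hx (norm_nonneg _) hy

lemma ult_pow {x : ℚ_[p]} (hx : ‖x‖ ≤ 1) (n : ℕ) : ‖x ^ n‖ ≤ 1 := by
  rw [norm_pow]
  exact pow_le_one₀ (norm_nonneg _) hx

lemma ult_nat (n : ℕ) : ‖(n : ℚ_[p])‖ ≤ 1 := by
  have := Padic.norm_int_le_one (p := p) (n : ℤ)
  push_cast at this
  exact this

lemma ult_sum {s : Finset ℕ} {f : ℕ → ℚ_[p]} (h : ∀ i ∈ s, ‖f i‖ ≤ 1) :
    ‖∑ i ∈ s, f i‖ ≤ 1 := by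
  classical
  induction s using Finset.induction_on with
  | empty => simp
  | insert _ _ hx ih =>
    rw [Finset.sum_insert hx]
    exact ult_add p (h _ (Finset.mem_insert_self _ _))
      (ih fun i hi => h i (Finset.mem_insert_of_mem hi))

lemma unit_nat {i : ℕ} (h1 : 0 < i) (h2 : i < p) : ‖(i : ℚ_[p])‖ = 1 := by
  have hle : ‖((i : ℤ) : ℚ_[p])‖ ≤ 1 := Padic.norm_int_le_one _
  have hlt : ¬ ‖((i : ℤ) : ℚ_[p])‖ < 1 := by
    rw [Padic.norm_intCast_lt_one_iff]
    intro hd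
    have := Int.le_of_dvd (by exact_mod_cast h1) hd
    omega
  push_cast at hle hlt ⊢
  linarith [lt_or_eq_of_le hle]

lemma ult_inv_pow {i : ℕ} (h1 : 0 < i) (h2 : i < p) (m : ℕ) :
    ‖(1 / (i : ℚ_[p]) ^ m)‖ ≤ 1 := by
  rw [norm_div, norm_one, norm_pow, unit_nat p h1 h2]
  simp

lemma ult_hsum {k : ℕ} (hk : k < p) (m : ℕ) : ‖((hsum m k : ℚ) : ℚ_[p])‖ ≤ 1 := by
  have : ((hsum m k : ℚ) : ℚ_[p]) = ∑ i ∈ Finset.Icc 1 k, 1 / (i : ℚ_[p]) ^ m := by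
    rw [hsum]; push_cast; rfl
  rw [this]
  refine ult_sum p fun i hi => ?_
  rw [Finset.mem_Icc] at hi
  exact ult_inv_pow p (by omega) (by omega) m

lemma ult_mhs2 {k : ℕ} (hk : k < p) (a b : ℕ) : ‖((mhs2 a b k : ℚ) : ℚ_[p])‖ ≤ 1 := by
  have : ((mhs2 a b k : ℚ) : ℚ_[p]) =
      ∑ j ∈ Finset.Icc 1 k, ∑ i ∈ Finset.Ico 1 j, 1 / ((i : ℚ_[p]) ^ a * (j : ℚ_[p]) ^ b) := by
    rw [mhs2]; push_cast; rfl
  rw [this]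
  refine ult_sum p fun j hj => ult_sum p fun i hi => ?_
  rw [Finset.mem_Icc] at hj
  rw [Finset.mem_Ico] at hi
  rw [norm_div, norm_one, norm_mul, norm_pow, norm_pow,
    unit_nat p (by omega) (by omega : i < p), unit_nat p (by omega) (by omega : j < p)]
  simp

lemma ult_mhs3 {k : ℕ} (hk : k < p) (a b c : ℕ) : ‖((mhs3 a b c k : ℚ) : ℚ_[p])‖ ≤ 1 := by
  have : ((mhs3 a b c k : ℚ) : ℚ_[p]) =
      ∑ l ∈ Finset.Icc 1 k, ∑ j ∈ Finset.Ico 1 l, ∑ i ∈ Finset.Ico 1 j,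
        1 / ((i : ℚ_[p]) ^ a * (j : ℚ_[p]) ^ b * (l : ℚ_[p]) ^ c) := by
    rw [mhs3]; push_cast; rfl
  rw [this]
  refine ult_sum p fun l hl => ult_sum p fun j hj => ult_sum p fun i hi => ?_
  rw [Finset.mem_Icc] at hl
  rw [Finset.mem_Ico] at hj
  rw [Finset.mem_Ico] at hi
  rw [norm_div, norm_one, norm_mul, norm_mul, norm_pow, norm_pow, norm_pow,
    unit_nat p (by omega) (by omega : i < p), unit_nat p (by omega) (by omega : j < p),
    unit_nat p (by omega) (by omega : l < p)]
  simp

end helpers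

-- recurrence lemmas
lemma hsum_succ (m k : ℕ) : hsum m (k + 1) = hsum m k + 1 / ((k : ℚ) + 1) ^ m := by
  rw [hsum, hsum, Finset.sum_Icc_succ_top (by omega : 1 ≤ k + 1)]
  push_cast
  ring

lemma mhs2_succ (a b k : ℕ) :
    mhs2 a b (k + 1) = mhs2 a b k + (1 / ((k : ℚ) + 1) ^ b) * hsum a k := by
  rw [mhs2, mhs2, Finset.sum_Icc_succ_top (by omega : 1 ≤ k + 1), hsum,
    Finset.Ico_add_one_right_eq_Icc, Finset.mul_sum]
  congr 1
  refine Finset.sum_congr rfl fun i _ => ?_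
  push_cast
  rw [one_div, mul_inv, one_div, one_div]
  ring

lemma mhs3_succ (a b c k : ℕ) :
    mhs3 a b c (k + 1) = mhs3 a b c k + (1 / ((k : ℚ) + 1) ^ c) * mhs2 a b k := by
  rw [mhs3, mhs3, Finset.sum_Icc_succ_top (by omega : 1 ≤ k + 1), mhs2,
    Finset.Ico_add_one_right_eq_Icc, Finset.mul_sum]
  congr 1
  refine Finset.sum_congr rfl fun j _ => ?_
  rw [Finset.mul_sum]
  refine Finset.sum_congr rfl fun i _ => ?_
  push_cast
  rw [one_div, mul_inv, mul_inv, one_div, one_div]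
  ring

/-- the RHS expression -/
def Gf (p k : ℕ) : ℚ :=
  1 - 2 * (p : ℚ) ^ 2 * hsum 2 k + (p : ℚ) ^ 4 * hsum 4 k
    + 4 * (p : ℚ) ^ 4 * mhs2 2 2 k
    - 2 * (p : ℚ) ^ 6 * (mhs2 2 4 k + mhs2 4 2 k)
    - 8 * (p : ℚ) ^ 6 * mhs3 2 2 2 k

lemma main_bound (p : ℕ) [hp : Fact p.Prime] : ∀ k : ℕ, k ≤ p - 1 →
    ‖(((((p - 1).choose k : ℚ) ^ 2 * ((p + k).choose k : ℚ) ^ 2 - Gf p k : ℚ)) : ℚ_[p])‖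
      ≤ (p : ℝ) ^ (-8 : ℤ) := by
  have hp2 : 2 ≤ p := hp.out.two_le
  intro k
  induction k with
  | zero =>
    intro _
    have : Gf p 0 = 1 := by
      simp [Gf, hsum, mhs2, mhs3]
    simp [this]
  | succ k ih =>
    intro hk1
    have hk : k ≤ p - 1 := by omega
    have IH := ih hk
    -- notation
    set a : ℚ := ((p - 1).choose k : ℚ) with ha
    set b : ℚ := ((p + k).choose k : ℚ) with hb
    set a' : ℚ := ((p - 1).choose (k + 1) : ℚ) with ha'
    set b' : ℚ := ((p + (k + 1)).choose (k + 1) : ℚ) with hb'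
    set M : ℚ := (k : ℚ) + 1 with hM
    -- choose recurrences over ℚ
    have hcast : ((p - 1 - k : ℕ) : ℚ) = (p : ℚ) - 1 - (k : ℚ) := by
      rw [Nat.cast_sub hk, Nat.cast_sub (by omega : 1 ≤ p)]
      norm_num
    have FA : a' * M = a * ((p : ℚ) - 1 - k) := by
      have := Nat.choose_succ_right_eq (p - 1) k
      have h2 : ((p - 1).choose (k + 1) * (k + 1) : ℕ) = ((p - 1).choose k * (p - 1 - k) : ℕ) :=
        this
      rw [ha', hM, ha, ← hcast]
      exact_mod_cast h2
    have FB : ((p : ℚ) + k + 1) * b = b' * M := by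
      have h2 := Nat.add_one_mul_choose_eq (p + k) k
      rw [hb, hb', hM]
      have h3 : ((p + k + 1) * (p + k).choose k : ℕ) = ((p + k + 1).choose (k + 1) * (k + 1) : ℕ) := h2
      have h4 : p + (k + 1) = p + k + 1 := by omega
      rw [h4]
      exact_mod_cast h3
    -- F step identity
    have Fstep : a' ^ 2 * b' ^ 2 * M ^ 4 = a ^ 2 * b ^ 2 * ((p : ℚ) ^ 2 - M ^ 2) ^ 2 := by
      have h1 : a' ^ 2 * b' ^ 2 * M ^ 4 = (a' * M) ^ 2 * (b' * M) ^ 2 := by ring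
      rw [h1, FA, ← FB, hM]
      ring
    -- G step identity
    have hMne : M ≠ 0 := by rw [hM]; positivity
    set S : ℚ := 4 * M ^ 2 * (mhs2 2 4 k + mhs2 4 2 k) + 16 * M ^ 2 * mhs3 2 2 2 k
      + hsum 4 k + 4 * mhs2 2 2 k - 2 * (p : ℚ) ^ 2 * (mhs2 2 4 k + mhs2 4 2 k)
      - 8 * (p : ℚ) ^ 2 * mhs3 2 2 2 k with hS
    have Gstep : Gf p k * ((p : ℚ) ^ 2 - M ^ 2) ^ 2 - Gf p (k + 1) * M ^ 4 = (p : ℚ) ^ 8 * S := by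
      rw [hS, Gf, Gf, hsum_succ, hsum_succ, mhs2_succ, mhs2_succ, mhs2_succ, mhs3_succ, hM]
      field_simp
      ring
    -- combine
    have key : (a' ^ 2 * b' ^ 2 - Gf p (k + 1)) * M ^ 4
        = (a ^ 2 * b ^ 2 - Gf p k) * ((p : ℚ) ^ 2 - M ^ 2) ^ 2 + (p : ℚ) ^ 8 * S := by
      rw [← Gstep]
      rw [sub_mul, Fstep]
      ring
    -- norms
    have hMnorm : ‖((M : ℚ) : ℚ_[p])‖ = 1 := by
      have : ((M : ℚ) : ℚ_[p]) = ((k + 1 : ℕ) : ℚ_[p]) := by rw [hM]; push_cast; ring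
      rw [this]
      exact unit_nat p (by omega) (by omega)
    have hkp : k < p := by omega
    have hSnorm : ‖((S : ℚ) : ℚ_[p])‖ ≤ 1 := by
      rw [hS]
      push_cast
      refine ult_sub p (ult_sub p (ult_add p (ult_add p (ult_add p ?_ ?_) ?_) ?_) ?_) ?_
      · refine ult_mul p (ult_mul p ?_ ?_) (ult_add p ?_ ?_)
        · exact_mod_cast ult_nat p 4
        · exact ult_pow p (le_of_eq hMnorm) 2
        · exact ult_mhs2 p hkp 2 4
        · exact ult_mhs2 p hkp 4 2
      · refine ult_mul p (ult_mul p ?_ ?_) ?_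
        · exact_mod_cast ult_nat p 16
        · exact ult_pow p (le_of_eq hMnorm) 2
        · exact ult_mhs3 p hkp 2 2 2
      · exact ult_hsum p hkp 4
      · exact ult_mul p (by exact_mod_cast ult_nat p 4) (ult_mhs2 p hkp 2 2)
      · refine ult_mul p (ult_mul p ?_ ?_) (ult_add p ?_ ?_)
        · exact_mod_cast ult_nat p 2
        · exact ult_pow p (ult_nat p p) 2
        · exact ult_mhs2 p hkp 2 4
        · exact ult_mhs2 p hkp 4 2
      · refine ult_mul p (ult_mul p ?_ ?_) ?_
        · exact_mod_cast ult_nat p 8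
        · exact ult_pow p (ult_nat p p) 2
        · exact ult_mhs3 p hkp 2 2 2
    have hp8 : ‖(((p : ℚ) ^ 8 * S : ℚ) : ℚ_[p])‖ ≤ (p : ℝ) ^ (-8 : ℤ) := by
      push_cast
      rw [norm_mul, norm_pow, Padic.norm_p]
      calc ((p : ℝ)⁻¹) ^ 8 * ‖((S : ℚ) : ℚ_[p])‖ ≤ ((p : ℝ)⁻¹) ^ 8 * 1 := by
            apply mul_le_mul_of_nonneg_left hSnorm (by positivity)
        _ = (p : ℝ) ^ (-8 : ℤ) := by
            rw [mul_one, inv_pow, ← zpow_natCast, ← zpow_neg]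
            norm_num
    have hu : ‖((((p : ℚ) ^ 2 - M ^ 2) ^ 2 : ℚ) : ℚ_[p])‖ ≤ 1 := by
      push_cast
      refine ult_pow p (ult_sub p ?_ (ult_pow p (le_of_eq hMnorm) 2)) 2
      exact ult_pow p (ult_nat p p) 2
    -- assemble
    have hfirst : ‖(((a ^ 2 * b ^ 2 - Gf p k) * ((p : ℚ) ^ 2 - M ^ 2) ^ 2 : ℚ) : ℚ_[p])‖
        ≤ (p : ℝ) ^ (-8 : ℤ) := by
      push_cast
      rw [norm_mul]
      calc ‖((a ^ 2 * b ^ 2 - Gf p k : ℚ) : ℚ_[p])‖ * ‖((((p : ℚ) ^ 2 - M ^ 2) ^ 2 : ℚ) : ℚ_[p])‖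
          ≤ (p : ℝ) ^ (-8 : ℤ) * 1 := by
            refine mul_le_mul ?_ hu (norm_nonneg _) (by positivity)
            exact_mod_cast IH
        _ = (p : ℝ) ^ (-8 : ℤ) := mul_one _
    have hsumn : ‖(((a' ^ 2 * b' ^ 2 - Gf p (k + 1)) * M ^ 4 : ℚ) : ℚ_[p])‖
        ≤ (p : ℝ) ^ (-8 : ℤ) := by
      rw [key]
      push_cast
      refine le_trans (Padic.nonarchimedean _ _) (max_le ?_ ?_)
      · exact_mod_cast hfirst
      · exact_mod_cast hp8
    have hfin : ‖(((a' ^ 2 * b' ^ 2 - Gf p (k + 1)) : ℚ) : ℚ_[p])‖ ≤ (p : ℝ) ^ (-8 : ℤ) := by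
      have heq : ‖(((a' ^ 2 * b' ^ 2 - Gf p (k + 1)) * M ^ 4 : ℚ) : ℚ_[p])‖
          = ‖(((a' ^ 2 * b' ^ 2 - Gf p (k + 1)) : ℚ) : ℚ_[p])‖ := by
        push_cast
        rw [norm_mul, norm_pow]
        rw [show ‖((M : ℚ) : ℚ_[p])‖ = 1 from hMnorm]
        norm_num
      rw [← heq]
      exact hsumn
    exact_mod_cast hfin


theorem stmt18 (p : ℕ) [Fact p.Prime] (k : ℕ) (hk : k ≤ p - 1) :
    padicCongr p 7 (((p - 1).choose k : ℚ) ^ 2 * ((p + k).choose k : ℚ) ^ 2)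
      (1 - 2 * (p : ℚ) ^ 2 * hsum 2 k + (p : ℚ) ^ 4 * hsum 4 k
        + 4 * (p : ℚ) ^ 4 * mhs2 2 2 k
        - 2 * (p : ℚ) ^ 6 * (mhs2 2 4 k + mhs2 4 2 k)
        - 8 * (p : ℚ) ^ 6 * mhs3 2 2 2 k) := by
  have hp2 : 2 ≤ p := (Fact.out : p.Prime).two_le
  have hmain := main_bound p k hk
  unfold padicCongr
  have heq : (((p - 1).choose k : ℚ) ^ 2 * ((p + k).choose k : ℚ) ^ 2)
      - (1 - 2 * (p : ℚ) ^ 2 * hsum 2 k + (p : ℚ) ^ 4 * hsum 4 k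
        + 4 * (p : ℚ) ^ 4 * mhs2 2 2 k
        - 2 * (p : ℚ) ^ 6 * (mhs2 2 4 k + mhs2 4 2 k)
        - 8 * (p : ℚ) ^ 6 * mhs3 2 2 2 k)
      = ((p - 1).choose k : ℚ) ^ 2 * ((p + k).choose k : ℚ) ^ 2 - Gf p k := by
    rw [Gf]
  rw [heq]
  refine le_trans hmain ?_
  apply zpow_le_zpow_right₀
  · exact_mod_cast Nat.one_le_iff_ne_zero.mpr (by omega)
  · norm_num
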